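/- arXiv:1811.01810 — 6 statements merged into one kernel-verified Lean document; each statement's English description precedes it below -/
import Mathlib

section
/- Let γ > 1, δ > 0, and α a positive C² solution of α^{3γ-2} α'' = δ on [0,∞) with α(0)=α₀>0, α'(0)=α₁. Then α is defined and bounded below by a positive constant on [0,∞): in fact α(t)^{3-3γ} ≤ (3γ-3)/(2δ) · (α₁² + (2δ/(3γ-3)) α₀^{3-3γ}) for all t, so α(t) ≥ c for some c > 0 independent of t. -/
/-!
Multiplying `α^p α'' = δ` by `2α'` shows that the energy `α'² + 2δ/(p-1) · α^(1-p)` is conserved.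
For `p = 3γ - 2 > 1` both terms are nonnegative, so `α^(1-p)` stays below its initial energy
(scaled by `(p-1)/(2δ)`); as `1 - p < 0`, this bounds `α` away from zero.
-/

open Real Set

noncomputable def odeEnergy (δ p : ℝ) (α : ℝ → ℝ) (t : ℝ) : ℝ :=
  deriv α t ^ 2 + 2 * δ / (p - 1) * α t ^ (1 - p)

section Energy

variable {δ p : ℝ} {α : ℝ → ℝ}

lemma hasDerivAt_odeEnergy (hp : p ≠ 1) (hC2 : ContDiff ℝ 2 α) {t : ℝ} (hαt : 0 < α t)
    (hODE : α t ^ p * deriv (deriv α) t = δ) : HasDerivAt (odeEnergy δ p α) 0 t := by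
  have hα' : ContDiff ℝ 1 (deriv α) := hC2.iterate_deriv' 1 1
  have hd1 : HasDerivAt α (deriv α t) t :=
    (hC2.differentiable (by norm_num) t).hasDerivAt
  have hd2 : HasDerivAt (deriv α) (deriv (deriv α) t) t :=
    (hα'.differentiable one_ne_zero t).hasDerivAt
  have hsum := (hd2.fun_pow 2).add ((hd1.rpow_const (p := 1 - p) (Or.inl hαt.ne')).const_mul
    (2 * δ / (p - 1)))
  refine hsum.congr_deriv ?_
  have hpow : α t ^ (-p) * α t ^ p = 1 := by
    rw [← rpow_add hαt, neg_add_cancel, rpow_zero]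
  have hc : 2 * δ / (p - 1) * (1 - p) = -(2 * δ) := by
    field_simp [sub_ne_zero.2 hp]
    ring
  rw [show 1 - p - 1 = -p by ring, Nat.cast_ofNat, show 2 - 1 = 1 from rfl, pow_one]
  linear_combination (-2 * deriv α t * deriv (deriv α) t) * hpow
    + (2 * deriv α t * α t ^ (-p)) * hODE + (deriv α t * α t ^ (-p)) * hc

lemma odeEnergy_eq_of_nonneg (hp : p ≠ 1) (hC2 : ContDiff ℝ 2 α)
    (hpos : ∀ t, 0 ≤ t → 0 < α t) (hODE : ∀ t, 0 ≤ t → α t ^ p * deriv (deriv α) t = δ)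
    {t : ℝ} (ht : 0 ≤ t) : odeEnergy δ p α t = odeEnergy δ p α 0 := by
  have hderiv : ∀ x ∈ Icc 0 t, HasDerivAt (odeEnergy δ p α) 0 x := fun x hx =>
    hasDerivAt_odeEnergy hp hC2 (hpos x hx.1) (hODE x hx.1)
  exact constant_of_has_deriv_right_zero
    (fun x hx => (hderiv x hx).continuousAt.continuousWithinAt)
    (fun x hx => (hderiv x (Ico_subset_Icc_self hx)).hasDerivWithinAt) t ⟨ht, le_rfl⟩

lemma rpow_le_odeEnergy (hδ : 0 < δ) (hp : 1 < p) (t : ℝ) :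
    α t ^ (1 - p) ≤ (p - 1) / (2 * δ) * odeEnergy δ p α t := by
  have hp1 : p - 1 ≠ 0 := by linarith
  have hsplit : (p - 1) / (2 * δ) * odeEnergy δ p α t
      = (p - 1) / (2 * δ) * deriv α t ^ 2 + α t ^ (1 - p) := by
    unfold odeEnergy
    field_simp
  have hkin : 0 ≤ (p - 1) / (2 * δ) * deriv α t ^ 2 := by
    have : 0 < (p - 1) / (2 * δ) := div_pos (by linarith) (by positivity)
    positivity
  linarith

end Energy

lemma rpow_inv_le_of_rpow_le {x K s : ℝ} (hx : 0 < x) (hs : s < 0) (h : x ^ s ≤ K) :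
    K ^ s⁻¹ ≤ x :=
  calc K ^ s⁻¹ ≤ (x ^ s) ^ s⁻¹ := rpow_le_rpow_of_nonpos (rpow_pos_of_pos hx s) h (inv_nonpos.2 hs.le)
    _ = x := rpow_rpow_inv hx.le hs.ne

theorem stmt_2_general (γ δ α₀ α₁ : ℝ) (hγ : 1 < γ) (hδ : 0 < δ)
    (α : ℝ → ℝ) (hC2 : ContDiff ℝ 2 α)
    (hpos : ∀ t, 0 ≤ t → 0 < α t)
    (hODE : ∀ t, 0 ≤ t → α t ^ (3 * γ - 2) * deriv (deriv α) t = δ)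
    (h0 : α 0 = α₀) (h0' : deriv α 0 = α₁) :
    (∀ t, 0 ≤ t →
      α t ^ (3 - 3 * γ) ≤ (3 * γ - 3) / (2 * δ) *
        (α₁ ^ 2 + (2 * δ / (3 * γ - 3)) * α₀ ^ (3 - 3 * γ))) ∧
    ∃ c : ℝ, 0 < c ∧ ∀ t, 0 ≤ t → c ≤ α t := by
  have hbound : ∀ t, 0 ≤ t → α t ^ (3 - 3 * γ) ≤ (3 * γ - 3) / (2 * δ) *
      (α₁ ^ 2 + (2 * δ / (3 * γ - 3)) * α₀ ^ (3 - 3 * γ)) := by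
    intro t ht
    have h := rpow_le_odeEnergy (α := α) hδ (show 1 < 3 * γ - 2 by linarith) t
    rw [odeEnergy_eq_of_nonneg (by linarith) hC2 hpos hODE ht] at h
    simpa only [odeEnergy, h0, h0', show 3 * γ - 2 - 1 = 3 * γ - 3 by ring,
      show 1 - (3 * γ - 2) = 3 - 3 * γ by ring] using h
  have hK : 0 < (3 * γ - 3) / (2 * δ) * (α₁ ^ 2 + (2 * δ / (3 * γ - 3)) * α₀ ^ (3 - 3 * γ)) :=
    (rpow_pos_of_pos (hpos 0 le_rfl) _).trans_le (hbound 0 le_rfl)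
  exact ⟨hbound, _, rpow_pos_of_pos hK _,
    fun t ht => rpow_inv_le_of_rpow_le (hpos t ht) (by linarith) (hbound t ht)⟩

/-- Uniform positive lower bound for solutions of the self-similar ODE. -/
theorem stmt_2 (γ δ α₀ α₁ : ℝ) (hγ : 1 < γ) (hδ : 0 < δ) (hα₀ : 0 < α₀)
    (α : ℝ → ℝ) (hC2 : ContDiff ℝ 2 α)
    (hpos : ∀ t, 0 ≤ t → 0 < α t)
    (hODE : ∀ t, 0 ≤ t → α t ^ (3 * γ - 2) * deriv (deriv α) t = δ)
    (h0 : α 0 = α₀) (h0' : deriv α 0 = α₁) :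
    (∀ t, 0 ≤ t →
      α t ^ (3 - 3 * γ) ≤ (3 * γ - 3) / (2 * δ) *
        (α₁ ^ 2 + (2 * δ / (3 * γ - 3)) * α₀ ^ (3 - 3 * γ))) ∧
    ∃ c : ℝ, 0 < c ∧ ∀ t, 0 ≤ t → c ≤ α t :=
  stmt_2_general γ δ α₀ α₁ hγ hδ α hC2 hpos hODE h0 h0'
end

section
/- Let γ > 1, δ > 0, and α a positive C² solution of α^{3γ-2} α'' = δ on [0,∞) with initial data α₀ > 0, α₁ ∈ ℝ. Then there exist constants c₁, c₂ > 0 such that α(t)/(c₁ + c₂ t) → 1 as t → ∞; in particular α grows linearly in t. -/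
/-!
The energy `E = α'² + 2δ/(p-1) · α^(1-p)` (with `p = 3γ - 2`) is conserved along solutions of
`α'' = δ α^(-p)`. Since `α'' > 0`, `α'` is increasing; it cannot stay nonpositive, for then `α`
would be bounded and `α''` bounded below by a positive constant. Hence `α → ∞`, the potential
term of `E` vanishes at infinity, and `α'` increases to `√E`; so `α t / t → √E` as well.
-/

open Filter Topology Set

section MeanValue

variable {f : ℝ → ℝ} {a m c : ℝ}

theorem add_mul_sub_le_of_le_deriv (hf : Differentiable ℝ f) (h : ∀ x, a < x → m ≤ deriv f x)
    {t : ℝ} (ht : a ≤ t) : f a + m * (t - a) ≤ f t := by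
  have := (convex_Ici a).mul_sub_le_image_sub_of_le_deriv hf.continuous.continuousOn
    hf.differentiableOn (by simpa using h) a self_mem_Ici t ht ht
  linarith

theorem tendsto_div_self_of_tendsto_deriv (hf : Differentiable ℝ f)
    (h : Tendsto (deriv f) atTop (𝓝 c)) : Tendsto (fun t => f t / t) atTop (𝓝 c) := by
  set g : ℝ → ℝ := fun t => f t - c * t
  have hg : ∀ x, HasDerivAt g (deriv f x - c) x := fun x => by
    simpa using (hf x).hasDerivAt.fun_sub (hasDerivAt_const_mul c)
  have hg' : Tendsto (fun x => deriv f x - c) atTop (𝓝 0) := by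
    simpa using h.sub_const c
  have hg_littleO : g =o[atTop] id := by
    refine Asymptotics.IsLittleO.of_bound fun ε hε => ?_
    obtain ⟨T, hT⟩ :=
      eventually_atTop.1 (hg'.eventually (Metric.closedBall_mem_nhds 0 (half_pos hε)))
    -- with `T₀ = max T 0`, the mean value theorem gives `|g t| ≤ |g T₀| + ε/2 · t` for `t ≥ T₀`
    filter_upwards [eventually_ge_atTop (max T 0), eventually_ge_atTop (2 * ‖g (max T 0)‖ / ε)]
      with t hTt ht
    have hmvt := (convex_Ici (max T 0)).norm_image_sub_le_of_norm_hasDerivWithin_le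
      (fun x _ => (hg x).hasDerivWithinAt)
      (fun x hx => by simpa using hT x (le_of_max_le_left hx)) self_mem_Ici hTt
    rw [div_le_iff₀ hε] at ht
    simp only [Real.norm_eq_abs, id] at hmvt ht ⊢
    rw [abs_of_nonneg (sub_nonneg.2 hTt)] at hmvt
    rw [abs_of_nonneg ((le_max_right T 0).trans hTt)]
    have := abs_sub_abs_le_abs_sub (g t) (g (max T 0))
    nlinarith [le_max_right T 0]
  refine (zero_add c ▸ hg_littleO.tendsto_div_nhds_zero.add_const c).congr' ?_
  filter_upwards [eventually_ne_atTop 0] with t ht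
  simp only [g, id]
  field_simp
  ring

theorem tendsto_div_const_add_mul_of_tendsto_div (hc : c ≠ 0)
    (h : Tendsto (fun t => f t / t) atTop (𝓝 c)) (b : ℝ) :
    Tendsto (fun t => f t / (b + c * t)) atTop (𝓝 1) := by
  have hden : Tendsto (fun t => b / t + c) atTop (𝓝 c) := by
    simpa using (tendsto_const_nhds.div_atTop tendsto_id).add_const c
  refine (div_self hc ▸ h.div hden hc).congr' ?_
  filter_upwards [eventually_ne_atTop 0] with t ht
  rw [Pi.div_apply, div_add' _ _ _ ht, div_div_div_cancel_right₀ ht, mul_comm]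

end MeanValue

noncomputable def energy (p δ : ℝ) (α : ℝ → ℝ) (t : ℝ) : ℝ :=
  deriv α t ^ 2 + 2 * δ / (p - 1) * α t ^ (1 - p)

structure IsPosSolution (p δ : ℝ) (α : ℝ → ℝ) : Prop where
  contDiff : ContDiff ℝ 2 α
  pos : ∀ t, 0 ≤ t → 0 < α t
  deriv_deriv : ∀ t, 0 ≤ t → deriv (deriv α) t = δ * α t ^ (-p)

namespace IsPosSolution

variable {p δ : ℝ} {α : ℝ → ℝ}

theorem differentiable (h : IsPosSolution p δ α) : Differentiable ℝ α :=
  h.contDiff.differentiable (by norm_num)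

theorem contDiff_deriv (h : IsPosSolution p δ α) : ContDiff ℝ 1 (deriv α) :=
  ((contDiff_succ_iff_deriv (n := 1)).1 h.contDiff).2.2

theorem differentiable_deriv (h : IsPosSolution p δ α) : Differentiable ℝ (deriv α) :=
  h.contDiff_deriv.differentiable one_ne_zero

theorem deriv_deriv_pos (h : IsPosSolution p δ α) (hδ : 0 < δ) {t : ℝ} (ht : 0 ≤ t) :
    0 < deriv (deriv α) t := by
  rw [h.deriv_deriv t ht]
  have := Real.rpow_pos_of_pos (h.pos t ht) (-p)
  positivity

theorem monotoneOn_deriv (h : IsPosSolution p δ α) (hδ : 0 < δ) :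
    MonotoneOn (deriv α) (Ici 0) :=
  monotoneOn_of_deriv_nonneg (convex_Ici 0) h.contDiff_deriv.continuous.continuousOn
    h.differentiable_deriv.differentiableOn
    (fun _ hx => (h.deriv_deriv_pos hδ (interior_subset hx)).le)

theorem hasDerivAt_energy (h : IsPosSolution p δ α) (hp : p ≠ 1) {t : ℝ} (ht : 0 ≤ t) :
    HasDerivAt (energy p δ α) 0 t := by
  have hkin : HasDerivAt (fun s => deriv α s ^ 2) (2 * deriv α t * deriv (deriv α) t) t := by
    simpa using (h.differentiable_deriv t).hasDerivAt.fun_pow 2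
  have hpot : HasDerivAt (fun s => α s ^ (1 - p)) (deriv α t * (1 - p) * α t ^ (-p)) t := by
    simpa using (h.differentiable t).hasDerivAt.rpow_const (p := 1 - p) (Or.inl (h.pos t ht).ne')
  refine (hkin.fun_add (hpot.const_mul (2 * δ / (p - 1)))).congr_deriv ?_
  rw [h.deriv_deriv t ht]
  field_simp [sub_ne_zero.2 hp]
  ring

theorem energy_eq (h : IsPosSolution p δ α) (hp : p ≠ 1) {t : ℝ} (ht : 0 ≤ t) :
    energy p δ α t = energy p δ α 0 := by
  have := (convex_Ici 0).norm_image_sub_le_of_norm_hasDerivWithin_le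
    (fun x hx => (h.hasDerivAt_energy hp hx).hasDerivWithinAt) (fun _ _ => norm_zero.le)
    self_mem_Ici (mem_Ici.2 ht)
  simpa [sub_eq_zero] using this

theorem energy_pos (h : IsPosSolution p δ α) (hp : 1 < p) (hδ : 0 < δ) :
    0 < energy p δ α 0 := by
  have := Real.rpow_pos_of_pos (h.pos 0 le_rfl) (1 - p)
  have := sub_pos.2 hp
  unfold energy
  positivity

theorem exists_deriv_pos (h : IsPosSolution p δ α) (hp : 0 ≤ p) (hδ : 0 < δ) :
    ∃ t₀, 0 ≤ t₀ ∧ 0 < deriv α t₀ := by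
  by_contra! hneg
  have hanti : AntitoneOn α (Ici 0) :=
    antitoneOn_of_deriv_nonpos (convex_Ici 0) h.differentiable.continuous.continuousOn
      h.differentiable.differentiableOn (fun x hx => hneg x (interior_subset hx))
  have hle : ∀ t, 0 ≤ t → α t ≤ α 0 := fun t ht => hanti self_mem_Ici ht ht
  set m := δ * α 0 ^ (-p)
  have hm : 0 < m := mul_pos hδ (Real.rpow_pos_of_pos (h.pos 0 le_rfl) _)
  have hgrow : ∀ t, 0 ≤ t → deriv α 0 + m * (t - 0) ≤ deriv α t :=
    fun t ht => add_mul_sub_le_of_le_deriv h.differentiable_deriv (fun x hx => by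
      rw [h.deriv_deriv x hx.le]
      exact mul_le_mul_of_nonneg_left
        (Real.rpow_le_rpow_of_nonpos (h.pos x hx.le) (hle x hx.le) (neg_nonpos.2 hp)) hδ.le) ht
  have hlin : Tendsto (fun t => deriv α 0 + m * (t - 0)) atTop atTop := by
    simpa using tendsto_atTop_add_const_left _ _ (tendsto_id.const_mul_atTop hm)
  obtain ⟨t, hpos, ht⟩ := ((hlin.eventually_gt_atTop 0).and (eventually_ge_atTop 0)).exists
  exact (hpos.trans_le (hgrow t ht)).not_ge (hneg t ht)

theorem tendsto_atTop (h : IsPosSolution p δ α) (hp : 0 ≤ p) (hδ : 0 < δ) :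
    Tendsto α atTop atTop := by
  obtain ⟨t₀, ht₀, hd⟩ := h.exists_deriv_pos hp hδ
  refine tendsto_atTop_mono' atTop (f₁ := fun t => α t₀ + deriv α t₀ * (t - t₀)) ?_ ?_
  · filter_upwards [eventually_ge_atTop t₀] with t ht
    exact add_mul_sub_le_of_le_deriv h.differentiable (fun x hx =>
      h.monotoneOn_deriv hδ ht₀ (ht₀.trans hx.le) hx.le) ht
  · exact tendsto_atTop_add_const_left _ _
      ((tendsto_atTop_add_const_right _ _ tendsto_id).const_mul_atTop hd)

theorem tendsto_deriv (h : IsPosSolution p δ α) (hp : 1 < p) (hδ : 0 < δ) :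
    Tendsto (deriv α) atTop (𝓝 √(energy p δ α 0)) := by
  have hpot : Tendsto (fun t => α t ^ (1 - p)) atTop (𝓝 0) := by
    have := (tendsto_rpow_neg_atTop (sub_pos.2 hp)).comp (h.tendsto_atTop (by linarith) hδ)
    rwa [neg_sub] at this
  have hsq : Tendsto (fun t => deriv α t ^ 2) atTop (𝓝 (energy p δ α 0)) := by
    have := (hpot.const_mul (2 * δ / (p - 1))).const_sub (energy p δ α 0)
    rw [mul_zero, sub_zero] at this
    refine this.congr' ?_
    filter_upwards [eventually_ge_atTop 0] with t ht
    rw [← h.energy_eq hp.ne' ht, energy, add_sub_cancel_right]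
  obtain ⟨t₀, ht₀, hd⟩ := h.exists_deriv_pos (by linarith) hδ
  refine (Real.continuous_sqrt.tendsto _ |>.comp hsq).congr' ?_
  filter_upwards [eventually_ge_atTop t₀] with t ht
  exact Real.sqrt_sq (hd.trans_le (h.monotoneOn_deriv hδ ht₀ (ht₀.trans ht) ht)).le

end IsPosSolution

theorem stmt_3_general (γ δ : ℝ) (hγ : 1 < γ) (hδ : 0 < δ)
    (α : ℝ → ℝ) (hC2 : ContDiff ℝ 2 α)
    (hpos : ∀ t, 0 ≤ t → 0 < α t)
    (hODE : ∀ t, 0 ≤ t → α t ^ (3 * γ - 2) * deriv (deriv α) t = δ) :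
    ∃ c₁ c₂ : ℝ, 0 < c₁ ∧ 0 < c₂ ∧
      Tendsto (fun t => α t / (c₁ + c₂ * t)) atTop (nhds 1) := by
  have hsol : IsPosSolution (3 * γ - 2) δ α := ⟨hC2, hpos, fun t ht => by
    rw [Real.rpow_neg (hpos t ht).le, ← div_eq_mul_inv, eq_div_iff (by positivity [hpos t ht]),
      mul_comm, hODE t ht]⟩
  have hp : 1 < 3 * γ - 2 := by linarith
  have hc₂ := Real.sqrt_pos.2 (hsol.energy_pos hp hδ)
  refine ⟨1, _, one_pos, hc₂, ?_⟩
  exact tendsto_div_const_add_mul_of_tendsto_div hc₂.ne'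
    (tendsto_div_self_of_tendsto_deriv hsol.differentiable (hsol.tendsto_deriv hp hδ)) 1

/-- Linear growth of the self-similar expansion factor. -/
theorem stmt_3 (γ δ α₀ α₁ : ℝ) (hγ : 1 < γ) (hδ : 0 < δ) (hα₀ : 0 < α₀)
    (α : ℝ → ℝ) (hC2 : ContDiff ℝ 2 α)
    (hpos : ∀ t, 0 ≤ t → 0 < α t)
    (hODE : ∀ t, 0 ≤ t → α t ^ (3 * γ - 2) * deriv (deriv α) t = δ)
    (h0 : α 0 = α₀) (h0' : deriv α 0 = α₁) :
    ∃ c₁ c₂ : ℝ, 0 < c₁ ∧ 0 < c₂ ∧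
      Tendsto (fun t => α t / (c₁ + c₂ * t)) atTop (nhds 1) :=
  stmt_3_general γ δ hγ hδ α hC2 hpos hODE
end

section
/- Assume γ > 1, δ > 0, α₀ > 0, α₁ > 0, and α(τ) is a positive C² solution of α^{3γ-4} α_ττ − α^{3γ-5} (α_τ)² = δ with α(0)=α₀, α_τ(0)=α₀α₁. Then for all τ ≥ 0: β₁ α(τ) ≤ α_τ(τ) ≤ β₂ α(τ) and α₀ e^{β₁ τ} ≤ α(τ) ≤ α₀ e^{β₂ τ}, where β₁ = α₁ and β₂ = (α₁² + (2δ/(3γ-3)) α₀^{3-3γ})^{1/2}. -/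
open Real Set

/-! The log-derivative `w = α'/α` satisfies `w' = δ α^(3-3γ) > 0`, so `w ≥ w 0 = α₁`, and the
energy `w² + 2δ/(3γ-3) · α^(3-3γ)` is conserved, equal to `β₂²`; since the potential term is
nonnegative, `w² ≤ β₂²`. Hence `β₁ α ≤ α' ≤ β₂ α`, and comparing `α` with `α₀ e^(β τ)` (i.e. showing that
`α e^(-β τ)` is monotone) gives the exponential bounds. -/

theorem monotoneOn_Ici_of_hasDerivAt_nonneg {f f' : ℝ → ℝ} {a : ℝ}
    (hf : ∀ x ∈ Ici a, HasDerivAt f (f' x) x) (hf' : ∀ x ∈ Ioi a, 0 ≤ f' x) :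
    MonotoneOn f (Ici a) :=
  monotoneOn_of_hasDerivWithinAt_nonneg (convex_Ici a)
    (fun x hx ↦ (hf x hx).continuousAt.continuousWithinAt)
    (fun x hx ↦ (hf x (interior_subset hx)).hasDerivWithinAt)
    (by simpa only [interior_Ici] using hf')

theorem mul_exp_le_of_mul_le_deriv {f f' : ℝ → ℝ} {c : ℝ}
    (hf : ∀ x ∈ Ici 0, HasDerivAt f (f' x) x) (hc : ∀ x ∈ Ici 0, c * f x ≤ f' x)
    {x : ℝ} (hx : 0 ≤ x) : f 0 * exp (c * x) ≤ f x := by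
  have hg : ∀ s ∈ Ici (0 : ℝ), HasDerivAt (fun s ↦ f s * exp (-c * s))
      ((f' s - c * f s) * exp (-c * s)) s := fun s hs ↦
    ((hf s hs).mul ((hasDerivAt_id' s).const_mul (-c)).exp).congr_deriv (by ring)
  have := monotoneOn_Ici_of_hasDerivAt_nonneg hg
    (fun s hs ↦ mul_nonneg (sub_nonneg.2 (hc s (Ioi_subset_Ici_self hs))) (exp_pos _).le)
    self_mem_Ici hx hx
  dsimp only at this
  rwa [mul_zero, exp_zero, mul_one, neg_mul, exp_neg, ← div_eq_mul_inv,
    le_div_iff₀ (exp_pos _)] at this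

theorem le_mul_exp_of_deriv_le_mul {f f' : ℝ → ℝ} {c : ℝ}
    (hf : ∀ x ∈ Ici 0, HasDerivAt f (f' x) x) (hc : ∀ x ∈ Ici 0, f' x ≤ c * f x)
    {x : ℝ} (hx : 0 ≤ x) : f x ≤ f 0 * exp (c * x) := by
  have := mul_exp_le_of_mul_le_deriv (f := -f) (f' := -f') (fun s hs ↦ (hf s hs).neg)
    (fun s hs ↦ by simpa only [Pi.neg_apply, mul_neg, neg_le_neg_iff] using hc s hs) hx
  simpa only [Pi.neg_apply, neg_mul, neg_le_neg_iff] using this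

section SelfSimilarODE

variable {γ δ : ℝ} {α : ℝ → ℝ}

noncomputable def selfSimilarEnergy (γ δ : ℝ) (α : ℝ → ℝ) (τ : ℝ) : ℝ :=
  logDeriv α τ ^ 2 + 2 * δ / (3 * γ - 3) * α τ ^ (3 - 3 * γ)

theorem hasDerivAt_logDeriv_of_ode (hα : ContDiff ℝ 2 α) {τ : ℝ} (hpos : 0 < α τ)
    (hODE : α τ ^ (3 * γ - 4) * deriv (deriv α) τ - α τ ^ (3 * γ - 5) * deriv α τ ^ 2 = δ) :
    HasDerivAt (logDeriv α) (δ * α τ ^ (3 - 3 * γ)) τ := by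
  have hd1 : HasDerivAt α (deriv α τ) τ := (hα.differentiable (by norm_num) τ).hasDerivAt
  have hd2 : HasDerivAt (deriv α) (deriv (deriv α) τ) τ :=
    ((hα.iterate_deriv' 1 1).differentiable (by norm_num) τ).hasDerivAt
  refine (hd2.div hd1 hpos.ne').congr_deriv ?_
  have hp : α τ ^ (3 * γ - 4) = α τ ^ (3 * γ - 5) * α τ := by
    rw [← rpow_add_one hpos.ne']; ring_nf
  have hq : α τ ^ (3 - 3 * γ) * α τ ^ (3 * γ - 5) * α τ ^ 2 = 1 := by
    rw [← rpow_natCast, ← rpow_add hpos, ← rpow_add hpos]; norm_num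
  rw [← hODE, hp, div_eq_iff (pow_ne_zero 2 hpos.ne')]
  linear_combination -(α τ * deriv (deriv α) τ - deriv α τ ^ 2) * hq

theorem hasDerivAt_selfSimilarEnergy (hγ : γ ≠ 1) (hα : ContDiff ℝ 2 α) {τ : ℝ}
    (hpos : 0 < α τ)
    (hODE : α τ ^ (3 * γ - 4) * deriv (deriv α) τ - α τ ^ (3 * γ - 5) * deriv α τ ^ 2 = δ) :
    HasDerivAt (selfSimilarEnergy γ δ α) 0 τ := by
  have hd1 : HasDerivAt α (deriv α τ) τ := (hα.differentiable (by norm_num) τ).hasDerivAt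
  refine (((hasDerivAt_logDeriv_of_ode hα hpos hODE).pow 2).add
    ((hd1.rpow_const (Or.inl hpos.ne')).const_mul _)).congr_deriv ?_
  have h3 : 3 * γ - 3 ≠ 0 := fun h ↦ hγ (by linarith)
  have ha := hpos.ne'
  rw [rpow_sub_one ha, logDeriv_apply]
  norm_num
  field_simp
  ring

theorem selfSimilarEnergy_eq_of_ode (hγ : γ ≠ 1) (hα : ContDiff ℝ 2 α)
    (hpos : ∀ τ ∈ Ici 0, 0 < α τ)
    (hODE : ∀ τ ∈ Ici 0,
      α τ ^ (3 * γ - 4) * deriv (deriv α) τ - α τ ^ (3 * γ - 5) * deriv α τ ^ 2 = δ)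
    {τ : ℝ} (hτ : 0 ≤ τ) : selfSimilarEnergy γ δ α τ = selfSimilarEnergy γ δ α 0 := by
  have hE : ∀ s ∈ Ici (0 : ℝ), HasDerivAt (selfSimilarEnergy γ δ α) 0 s := fun s hs ↦
    hasDerivAt_selfSimilarEnergy hγ hα (hpos s hs) (hODE s hs)
  exact constant_of_has_deriv_right_zero (fun s hs ↦ (hE s hs.1).continuousAt.continuousWithinAt)
    (fun s hs ↦ (hE s hs.1).hasDerivWithinAt) τ ⟨hτ, le_rfl⟩

end SelfSimilarODE

theorem stmt_5_general (γ δ α₀ α₁ : ℝ) (hγ : 1 < γ) (hδ : 0 < δ)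
    (α : ℝ → ℝ) (hC2 : ContDiff ℝ 2 α)
    (hpos : ∀ τ, 0 ≤ τ → 0 < α τ)
    (hODE : ∀ τ, 0 ≤ τ →
      α τ ^ (3 * γ - 4) * deriv (deriv α) τ - α τ ^ (3 * γ - 5) * (deriv α τ) ^ 2 = δ)
    (h0 : α 0 = α₀) (h0' : deriv α 0 = α₀ * α₁) :
    ∀ τ, 0 ≤ τ →
      (α₁ * α τ ≤ deriv α τ ∧
        deriv α τ ≤ Real.sqrt (α₁ ^ 2 + 2 * δ / (3 * γ - 3) * α₀ ^ (3 - 3 * γ)) * α τ) ∧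
      (α₀ * Real.exp (α₁ * τ) ≤ α τ ∧
        α τ ≤ α₀ * Real.exp
          (Real.sqrt (α₁ ^ 2 + 2 * δ / (3 * γ - 3) * α₀ ^ (3 - 3 * γ)) * τ)) := by
  set β₂ := √(α₁ ^ 2 + 2 * δ / (3 * γ - 3) * α₀ ^ (3 - 3 * γ))
  have hw0 : logDeriv α 0 = α₁ := by
    rw [logDeriv_apply, h0', h0, mul_div_cancel_left₀ _ (h0 ▸ hpos 0 le_rfl).ne']
  have hw_ge : ∀ τ ∈ Ici 0, α₁ ≤ logDeriv α τ := fun τ hτ ↦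
    hw0 ▸ monotoneOn_Ici_of_hasDerivAt_nonneg
      (fun s hs ↦ hasDerivAt_logDeriv_of_ode hC2 (hpos s hs) (hODE s hs))
      (fun s hs ↦ by have := hpos s (le_of_lt hs); positivity) self_mem_Ici hτ hτ
  have hw_le : ∀ τ ∈ Ici 0, logDeriv α τ ≤ β₂ := fun τ hτ ↦ by
    have hE := selfSimilarEnergy_eq_of_ode hγ.ne' hC2 hpos hODE hτ
    rw [selfSimilarEnergy, selfSimilarEnergy, hw0, h0] at hE
    have hpot : 0 ≤ 2 * δ / (3 * γ - 3) * α τ ^ (3 - 3 * γ) := by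
      have := hpos τ hτ
      have : 0 < 3 * γ - 3 := by linarith
      positivity
    exact (le_abs_self _).trans (abs_le_sqrt (by linarith))
  have hderiv : ∀ τ ∈ Ici 0, deriv α τ = logDeriv α τ * α τ := fun τ hτ ↦
    (div_mul_cancel₀ _ (hpos τ hτ).ne').symm
  have hlow : ∀ τ ∈ Ici 0, α₁ * α τ ≤ deriv α τ := fun τ hτ ↦
    hderiv τ hτ ▸ mul_le_mul_of_nonneg_right (hw_ge τ hτ) (hpos τ hτ).le
  have hhigh : ∀ τ ∈ Ici 0, deriv α τ ≤ β₂ * α τ := fun τ hτ ↦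
    hderiv τ hτ ▸ mul_le_mul_of_nonneg_right (hw_le τ hτ) (hpos τ hτ).le
  have hα' : ∀ τ ∈ Ici 0, HasDerivAt α (deriv α τ) τ := fun τ _ ↦
    (hC2.differentiable (by norm_num) τ).hasDerivAt
  intro τ hτ
  exact ⟨⟨hlow τ hτ, hhigh τ hτ⟩, h0 ▸ mul_exp_le_of_mul_le_deriv hα' hlow hτ,
    h0 ▸ le_mul_exp_of_deriv_le_mul hα' hhigh hτ⟩

/-- Exponential growth estimates for the rescaled expansion factor. -/
theorem stmt_5 (γ δ α₀ α₁ : ℝ) (hγ : 1 < γ) (hδ : 0 < δ) (hα₀ : 0 < α₀) (hα₁ : 0 < α₁)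
    (α : ℝ → ℝ) (hC2 : ContDiff ℝ 2 α)
    (hpos : ∀ τ, 0 ≤ τ → 0 < α τ)
    (hODE : ∀ τ, 0 ≤ τ →
      α τ ^ (3 * γ - 4) * deriv (deriv α) τ - α τ ^ (3 * γ - 5) * (deriv α τ) ^ 2 = δ)
    (h0 : α 0 = α₀) (h0' : deriv α 0 = α₀ * α₁) :
    ∀ τ, 0 ≤ τ →
      (α₁ * α τ ≤ deriv α τ ∧
        deriv α τ ≤ Real.sqrt (α₁ ^ 2 + 2 * δ / (3 * γ - 3) * α₀ ^ (3 - 3 * γ)) * α τ) ∧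
      (α₀ * Real.exp (α₁ * τ) ≤ α τ ∧
        α τ ≤ α₀ * Real.exp
          (Real.sqrt (α₁ ^ 2 + 2 * δ / (3 * γ - 3) * α₀ ^ (3 - 3 * γ)) * τ)) :=
  stmt_5_general γ δ α₀ α₁ hγ hδ α hC2 hpos hODE h0 h0'
end

section
/- Hardy's inequality (k > 1 case): Let k > 1 and g : (0,1) → ℝ be such that ∫₀¹ s^k (g(s)² + g'(s)²) ds < ∞. Then there exists a constant C = C(k) such that ∫₀¹ s^{k-2} g(s)² ds ≤ C ∫₀¹ s^k (g(s)² + g'(s)²) ds. -/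
open MeasureTheory Set Filter Topology

/-!
With `F s = s ^ (k - 1) * g s ^ 2` one has
`F' = (k - 1) s ^ (k - 2) g ^ 2 + 2 s ^ (k - 1) g g'`, and completing the square bounds the cross
term, so that `F' ≥ (k - 1) / 2 * s ^ (k - 2) g ^ 2 - 2 / (k - 1) * s ^ k g' ^ 2`. Integrating over
`(a, b]` and letting `a → 0` controls `∫₀ᵇ s ^ (k - 2) g ^ 2` by `F b` and `∫ s ^ k g' ^ 2`,
using `F ≥ 0` at the left end. Choosing `b ∈ (1/2, 1)` where `s ^ k (g ^ 2 + g' ^ 2)` is at most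
twice its mean bounds `F b`, and on `(b, 1)` the weight `s ^ (k - 2)` is at most `4 s ^ k`.
-/

lemma rpow_eq_rpow_sub_two_mul_sq {x : ℝ} (hx : x ≠ 0) (k : ℝ) : x ^ k = x ^ (k - 2) * x ^ 2 := by
  simpa using Real.rpow_add_natCast hx (k - 2) 2

lemma rpow_sub_natCast_le_two_pow_mul {b : ℝ} (hb : 1 / 2 ≤ b) (k : ℝ) (n : ℕ) :
    b ^ (k - n) ≤ 2 ^ n * b ^ k := by
  have hb0 : 0 < b := by linarith
  rw [Real.rpow_sub_natCast hb0.ne', div_le_iff₀ (by positivity), mul_right_comm, ← mul_pow]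
  exact le_mul_of_one_le_left (by positivity) (one_le_pow₀ (by linarith))

lemma continuousOn_rpow_mul_sq {g : ℝ → ℝ} {p : ℝ} {t : Set ℝ} (ht : ∀ x ∈ t, x ≠ 0)
    (hg : ContinuousOn g t) : ContinuousOn (fun x => x ^ p * g x ^ 2) t :=
  (continuousOn_id.rpow_const fun x hx => Or.inl (ht x hx)).mul (hg.pow 2)

lemma hasDerivAt_rpow_mul_sq {g : ℝ → ℝ} {p x : ℝ} (hx : x ≠ 0) (hg : DifferentiableAt ℝ g x) :
    HasDerivAt (fun s => s ^ p * g s ^ 2)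
      (p * x ^ (p - 1) * g x ^ 2 + x ^ p * (2 * g x * deriv g x)) x :=
  ((Real.hasDerivAt_rpow_const (Or.inl hx)).fun_mul (hg.hasDerivAt.fun_pow 2)).congr_deriv
    (by norm_num)

lemma hardy_deriv_lower_bound {k x : ℝ} (hk : 1 < k) (hx : 0 < x) (u v : ℝ) :
    (k - 1) / 2 * (x ^ (k - 2) * u ^ 2) - 2 / (k - 1) * (x ^ k * v ^ 2)
      ≤ (k - 1) * x ^ (k - 2) * u ^ 2 + x ^ (k - 1) * (2 * u * v) := by
  have hk1 : 0 < k - 1 := by linarith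
  have h1 : x ^ (k - 1) = x ^ (k - 2) * x := by
    rw [← Real.rpow_add_one hx.ne']; ring_nf
  have hsq : 0 ≤ x ^ (k - 2) * (((k - 1) * u + 2 * x * v) ^ 2 / (2 * (k - 1))) := by positivity
  have hid : (k - 1) * x ^ (k - 2) * u ^ 2 + x ^ (k - 1) * (2 * u * v)
      - ((k - 1) / 2 * (x ^ (k - 2) * u ^ 2) - 2 / (k - 1) * (x ^ k * v ^ 2))
      = x ^ (k - 2) * (((k - 1) * u + 2 * x * v) ^ 2 / (2 * (k - 1))) := by
    rw [h1, rpow_eq_rpow_sub_two_mul_sq hx.ne' k]; field_simp; ring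
  linarith

lemma hardy_estimate_Ioc {k a b : ℝ} {g : ℝ → ℝ} (hk : 1 < k) (ha : 0 < a) (hab : a ≤ b)
    (hg : ∀ x ∈ Icc a b, DifferentiableAt ℝ g x)
    (hw : IntegrableOn (fun s => s ^ k * deriv g s ^ 2) (Icc a b)) :
    ∫ s in Ioc a b, s ^ (k - 2) * g s ^ 2
      ≤ 2 / (k - 1) * (b ^ (k - 1) * g b ^ 2
        + 2 / (k - 1) * ∫ s in Ioc a b, s ^ k * deriv g s ^ 2) := by
  have hk1 : 0 < k - 1 := by linarith
  have hF : ∀ x ∈ Icc a b, HasDerivAt (fun s => s ^ (k - 1) * g s ^ 2)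
      ((k - 1) * x ^ (k - 2) * g x ^ 2 + x ^ (k - 1) * (2 * g x * deriv g x)) x := by
    intro x hx
    have h := hasDerivAt_rpow_mul_sq (p := k - 1) (ha.trans_le hx.1).ne' (hg x hx)
    rwa [show k - 1 - 1 = k - 2 by ring] at h
  have hu : IntegrableOn (fun s => s ^ (k - 2) * g s ^ 2) (Icc a b) :=
    (continuousOn_rpow_mul_sq (fun x hx => (ha.trans_le hx.1).ne')
      fun x hx => (hg x hx).continuousAt.continuousWithinAt).integrableOn_Icc
  have hFTC := intervalIntegral.integral_le_sub_of_hasDeriv_right_of_le hab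
    (fun x hx => (hF x hx).continuousAt.continuousWithinAt)
    (fun x hx => (hF x (Ioo_subset_Icc_self hx)).hasDerivWithinAt)
    ((hu.const_mul ((k - 1) / 2)).sub' (hw.const_mul (2 / (k - 1))))
    (fun x hx => hardy_deriv_lower_bound hk (ha.trans hx.1) (g x) (deriv g x))
  rw [intervalIntegral.integral_of_le hab,
    integral_sub ((hu.mono_set Ioc_subset_Icc_self).const_mul _)
      ((hw.mono_set Ioc_subset_Icc_self).const_mul _),
    integral_const_mul, integral_const_mul] at hFTC
  have hFa : 0 ≤ a ^ (k - 1) * g a ^ 2 := by positivity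
  calc ∫ s in Ioc a b, s ^ (k - 2) * g s ^ 2
      = 2 / (k - 1) * ((k - 1) / 2 * ∫ s in Ioc a b, s ^ (k - 2) * g s ^ 2) := by field_simp
    _ ≤ _ := by gcongr; linarith

lemma integrableOn_Ioc_and_setIntegral_le_of_forall_Ioc {f : ℝ → ℝ} {a₀ b M : ℝ} (hab : a₀ < b)
    (hf0 : ∀ x ∈ Ioc a₀ b, 0 ≤ f x) (hfi : ∀ a ∈ Ioo a₀ b, IntegrableOn f (Ioc a b))
    (hM : ∀ a ∈ Ioo a₀ b, ∫ x in Ioc a b, f x ≤ M) :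
    IntegrableOn f (Ioc a₀ b) ∧ ∫ x in Ioc a₀ b, f x ≤ M := by
  set a : ℕ → ℝ := fun n => a₀ + (b - a₀) / (n + 2)
  have ha_mem : ∀ n, a n ∈ Ioo a₀ b := fun n => by
    have hlt : (b - a₀) / (n + 2) < b - a₀ :=
      div_lt_self (sub_pos.2 hab) (by linarith [n.cast_nonneg (α := ℝ)])
    constructor
    · have : 0 < (b - a₀) / (n + 2) := div_pos (sub_pos.2 hab) (by positivity)
      linarith
    · linarith
  have ha_lim : Tendsto a atTop (𝓝 a₀) := by
    simpa using ((tendsto_const_div_atTop_nhds_zero_nat (b - a₀)).comp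
      (tendsto_add_atTop_nat 2)).const_add a₀
  have hcover : AECover (volume.restrict (Ioc a₀ b)) atTop fun n => Ioc (a n) b :=
    aecover_Ioc_of_Ioc ha_lim tendsto_const_nhds
  have hrestrict : ∀ n, (volume.restrict (Ioc a₀ b)).restrict (Ioc (a n) b)
      = volume.restrict (Ioc (a n) b) := fun n =>
    Measure.restrict_restrict_of_subset (Ioc_subset_Ioc_left (ha_mem n).1.le)
  have hfi' : ∀ n, IntegrableOn f (Ioc (a n) b) (volume.restrict (Ioc a₀ b)) := fun n => by
    rw [IntegrableOn, hrestrict]; exact hfi _ (ha_mem n)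
  have hM' : ∀ n, ∫ x in Ioc (a n) b, f x ∂(volume.restrict (Ioc a₀ b)) ≤ M := fun n => by
    rw [hrestrict]; exact hM _ (ha_mem n)
  have hint : IntegrableOn f (Ioc a₀ b) :=
    hcover.integrable_of_integral_bounded_of_nonneg_ae M hfi'
      (ae_restrict_of_forall_mem measurableSet_Ioc hf0) (Eventually.of_forall hM')
  exact ⟨hint, le_of_tendsto' (hcover.integral_tendsto_of_countably_generated hint) hM'⟩

lemma hardy_estimate_Ioc_zero {k b : ℝ} {g : ℝ → ℝ} (hk : 1 < k) (hb : 0 < b)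
    (hg : ∀ x ∈ Ioc 0 b, DifferentiableAt ℝ g x)
    (hw : IntegrableOn (fun s => s ^ k * deriv g s ^ 2) (Ioc 0 b)) :
    IntegrableOn (fun s => s ^ (k - 2) * g s ^ 2) (Ioc 0 b) ∧
      ∫ s in Ioc 0 b, s ^ (k - 2) * g s ^ 2
        ≤ 2 / (k - 1) * (b ^ (k - 1) * g b ^ 2
          + 2 / (k - 1) * ∫ s in Ioc 0 b, s ^ k * deriv g s ^ 2) := by
  have hk1 : 0 < k - 1 := by linarith
  refine integrableOn_Ioc_and_setIntegral_le_of_forall_Ioc hb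
    (fun x hx => by have := hx.1.le; positivity) (fun a ha => ?_) (fun a ha => ?_)
  all_goals have hIcc : Icc a b ⊆ Ioc 0 b := Icc_subset_Ioc_iff ha.2.le |>.2 ⟨ha.1, le_rfl⟩
  · exact (continuousOn_rpow_mul_sq (fun x hx => (ha.1.trans_le hx.1).ne')
      fun x hx => (hg x (hIcc hx)).continuousAt.continuousWithinAt).integrableOn_Icc.mono_set
      Ioc_subset_Icc_self
  refine (hardy_estimate_Ioc hk ha.1 ha.2.le (fun x hx => hg x (hIcc hx))
    (hw.mono_set hIcc)).trans ?_
  have hW : ∫ s in Ioc a b, s ^ k * deriv g s ^ 2 ≤ ∫ s in Ioc 0 b, s ^ k * deriv g s ^ 2 :=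
    setIntegral_mono_set hw (ae_restrict_of_forall_mem measurableSet_Ioc fun x hx => by
      have := hx.1.le; positivity) (Eventually.of_forall (Ioc_subset_Icc_self.trans hIcc))
  gcongr

lemma hardy_estimate_Ioo_one {k b : ℝ} {g : ℝ → ℝ} (hb : 1 / 2 ≤ b)
    (hg : ContinuousOn g (Ioo b 1))
    (hI : IntegrableOn (fun s => s ^ k * (g s ^ 2 + deriv g s ^ 2)) (Ioo b 1)) :
    IntegrableOn (fun s => s ^ (k - 2) * g s ^ 2) (Ioo b 1) ∧
      ∫ s in Ioo b 1, s ^ (k - 2) * g s ^ 2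
        ≤ 4 * ∫ s in Ioo b 1, s ^ k * (g s ^ 2 + deriv g s ^ 2) := by
  have hpos : ∀ s ∈ Ioo b 1, 0 < s := fun s hs => by linarith [hs.1]
  have hu0 : ∀ s ∈ Ioo b 1, 0 ≤ s ^ (k - 2) * g s ^ 2 := fun s hs => by
    have := hpos s hs; positivity
  have hpt : ∀ s ∈ Ioo b 1, s ^ (k - 2) * g s ^ 2 ≤ 4 * (s ^ k * (g s ^ 2 + deriv g s ^ 2)) := by
    intro s hs
    have := hpos s hs
    calc s ^ (k - 2) * g s ^ 2 ≤ 4 * s ^ k * g s ^ 2 := by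
          gcongr
          simpa [show (2:ℝ) ^ 2 = 4 by norm_num] using
            rpow_sub_natCast_le_two_pow_mul (hb.trans hs.1.le) k 2
      _ ≤ 4 * (s ^ k * (g s ^ 2 + deriv g s ^ 2)) := by
          rw [mul_assoc]; gcongr; exact le_add_of_nonneg_right (sq_nonneg _)
  have hu_meas :
      AEStronglyMeasurable (fun s => s ^ (k - 2) * g s ^ 2) (volume.restrict (Ioo b 1)) :=
    (continuousOn_rpow_mul_sq (fun s hs => (hpos s hs).ne') hg).aestronglyMeasurable
      measurableSet_Ioo
  have hint : IntegrableOn (fun s => s ^ (k - 2) * g s ^ 2) (Ioo b 1) :=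
    (hI.const_mul 4).mono' hu_meas (ae_restrict_of_forall_mem measurableSet_Ioo fun s hs => by
      rw [Real.norm_of_nonneg (hu0 s hs)]; exact hpt s hs)
  refine ⟨hint, ?_⟩
  rw [← integral_const_mul]
  exact setIntegral_mono_on hint (hI.const_mul 4) measurableSet_Ioo hpt

lemma integrableOn_rpow_mul_deriv_sq {k : ℝ} {g : ℝ → ℝ} {t : Set ℝ} (ht : MeasurableSet t)
    (ht0 : t ⊆ Ioi 0) (hI : IntegrableOn (fun s => s ^ k * (g s ^ 2 + deriv g s ^ 2)) t) :
    IntegrableOn (fun s => s ^ k * deriv g s ^ 2) t ∧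
      ∫ s in t, s ^ k * deriv g s ^ 2 ≤ ∫ s in t, s ^ k * (g s ^ 2 + deriv g s ^ 2) := by
  have hle : ∀ x ∈ t, x ^ k * deriv g x ^ 2 ≤ x ^ k * (g x ^ 2 + deriv g x ^ 2) := fun x hx =>
    mul_le_mul_of_nonneg_left (le_add_of_nonneg_left (sq_nonneg _))
      (Real.rpow_nonneg (mem_Ioi.1 (ht0 hx)).le k)
  have hint : IntegrableOn (fun s => s ^ k * deriv g s ^ 2) t :=
    hI.mono' ((measurable_id.pow_const k).mul
      ((measurable_deriv g).pow_const 2)).aestronglyMeasurable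
      (ae_restrict_of_forall_mem ht fun x hx => by
        rw [Real.norm_of_nonneg (by have := (mem_Ioi.1 (ht0 hx)).le; positivity)]; exact hle x hx)
  exact ⟨hint, setIntegral_mono_on hint hI ht hle⟩

lemma exists_mem_Ioo_le_two_mul_setIntegral {f : ℝ → ℝ} (hf : IntegrableOn f (Ioo 0 1))
    (hf0 : ∀ x ∈ Ioo 0 1, 0 ≤ f x) : ∃ b ∈ Ioo (1 / 2 : ℝ) 1, f b ≤ 2 * ∫ x in Ioo 0 1, f x := by
  have hsub : Ioo (1 / 2 : ℝ) 1 ⊆ Ioo 0 1 := Ioo_subset_Ioo_left (by norm_num)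
  obtain ⟨b, hb, hfb⟩ := exists_le_setAverage (μ := volume) (by norm_num) (by simp)
    (hf.mono_set hsub)
  refine ⟨b, hb, hfb.trans ?_⟩
  rw [setAverage_eq, measureReal_def, Real.volume_Ioo, smul_eq_mul]
  norm_num
  exact setIntegral_mono_set hf (ae_restrict_of_forall_mem measurableSet_Ioo hf0)
    (Eventually.of_forall hsub)

theorem hardy_inequality {k : ℝ} (hk : 1 < k) {g : ℝ → ℝ} (hg : DifferentiableOn ℝ g (Ioo 0 1))
    (hI : IntegrableOn (fun s => s ^ k * (g s ^ 2 + deriv g s ^ 2)) (Ioo 0 1)) :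
    IntegrableOn (fun s => s ^ (k - 2) * g s ^ 2) (Ioo 0 1) ∧
      ∫ s in Ioo (0:ℝ) 1, s ^ (k - 2) * g s ^ 2
        ≤ 4 * (k / (k - 1)) ^ 2 * ∫ s in Ioo (0:ℝ) 1, s ^ k * (g s ^ 2 + deriv g s ^ 2) := by
  have hk1 : 0 < k - 1 := by linarith
  set A := ∫ s in Ioo (0:ℝ) 1, s ^ k * (g s ^ 2 + deriv g s ^ 2)
  have hρ0 : ∀ x ∈ Ioo (0:ℝ) 1, 0 ≤ x ^ k * (g x ^ 2 + deriv g x ^ 2) := fun x hx => by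
    have := hx.1.le; positivity
  have hA_mono : ∀ s ⊆ Ioo (0:ℝ) 1, ∫ x in s, x ^ k * (g x ^ 2 + deriv g x ^ 2) ≤ A := fun s hs =>
    setIntegral_mono_set hI (ae_restrict_of_forall_mem measurableSet_Ioo hρ0)
      (Eventually.of_forall hs)
  obtain ⟨b, hb, hρb⟩ := exists_mem_Ioo_le_two_mul_setIntegral hI hρ0
  have hb0 : 0 < b := by linarith [hb.1]
  have hsub₀ : Ioc 0 b ⊆ Ioo 0 1 := Ioc_subset_Ioo_right hb.2
  have hsub₁ : Ioo b 1 ⊆ Ioo 0 1 := Ioo_subset_Ioo_left hb0.le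
  have hFb : b ^ (k - 1) * g b ^ 2 ≤ 4 * A := calc
    b ^ (k - 1) * g b ^ 2 ≤ 2 * b ^ k * g b ^ 2 := by
      gcongr; simpa using rpow_sub_natCast_le_two_pow_mul hb.1.le k 1
    _ ≤ 2 * (b ^ k * (g b ^ 2 + deriv g b ^ 2)) := by
      rw [mul_assoc]; gcongr; exact le_add_of_nonneg_right (sq_nonneg _)
    _ ≤ 4 * A := by linarith
  obtain ⟨hw, hW⟩ := integrableOn_rpow_mul_deriv_sq measurableSet_Ioc
    (hsub₀.trans Ioo_subset_Ioi_self) (hI.mono_set hsub₀)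
  have hhead := hardy_estimate_Ioc_zero hk hb0
    (fun x hx => hg.differentiableAt (isOpen_Ioo.mem_nhds (hsub₀ hx))) hw
  have htail := hardy_estimate_Ioo_one hb.1.le (hg.continuousOn.mono hsub₁) (hI.mono_set hsub₁)
  have hsplit : Ioc 0 b ∪ Ioo b 1 = Ioo 0 1 := Ioc_union_Ioo_eq_Ioo hb0.le hb.2
  refine ⟨hsplit ▸ hhead.1.union htail.1, ?_⟩
  rw [← hsplit, setIntegral_union (Ioc_disjoint_Ioi_same.mono_right Ioo_subset_Ioi_self)
    measurableSet_Ioo hhead.1 htail.1]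
  calc _ ≤ 2 / (k - 1) * (4 * A + 2 / (k - 1) * A) + 4 * A := by
        gcongr
        · exact hhead.2.trans (by gcongr; exact hW.trans (hA_mono _ hsub₀))
        · exact htail.2.trans (by gcongr; exact hA_mono _ hsub₁)
    _ = 4 * (k / (k - 1)) ^ 2 * A := by field_simp; ring

/-- Hardy's inequality, case `k > 1`. -/
theorem stmt_7 (k : ℝ) (hk : 1 < k) :
    ∃ C : ℝ, 0 < C ∧ ∀ g : ℝ → ℝ, DifferentiableOn ℝ g (Ioo 0 1) →
      IntegrableOn (fun s => s ^ k * (g s ^ 2 + deriv g s ^ 2)) (Ioo 0 1) →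
      ∫ s in Ioo (0:ℝ) 1, s ^ (k - 2) * g s ^ 2
        ≤ C * ∫ s in Ioo (0:ℝ) 1, s ^ k * (g s ^ 2 + deriv g s ^ 2) :=
  ⟨4 * (k / (k - 1)) ^ 2, by have := sub_pos.2 hk; positivity,
    fun _ hg hI => (hardy_inequality hk hg hI).2⟩
end

section
/- Nonlinear continuity/bootstrap lemma: let y : [0,T] → ℝ≥0 be continuous with y(0) ≤ A, and suppose y(τ) ≤ A + B ∫₀^τ e^{-λσ} y(σ)² dσ for all τ, where A, B ≥ 0, λ > 0 and 4AB < λ. Then y(τ) ≤ 2A for all τ ∈ [0,T]. -/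
/-! While `y ≤ 2A` on `[0, t)`, the weighted integral up to `t` is at most `(2A)² / λ`, so
`y t ≤ A + 4A²B / λ`, which is `< 2A` as soon as `A > 0`, since `4AB < λ`. Hence `y` can never be
the first to reach `2A`. For `A = 0` the gain is not strict; apply the strict statement to every
slightly larger `A'` and let `A' ↓ A`. -/

open Set Filter Topology MeasureTheory Real

theorem ContinuousOn.lt_on_Icc_of_bootstrap {α β : Type*} [ConditionallyCompleteLinearOrder α]
    [TopologicalSpace α] [OrderTopology α] [LinearOrder β] [TopologicalSpace β]
    [OrderClosedTopology β] {y : α → β} {a b : α} {c : β} (hy : ContinuousOn y (Icc a b))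
    (hstep : ∀ t ∈ Icc a b, (∀ s ∈ Ico a t, y s < c) → y t < c) :
    ∀ t ∈ Icc a b, y t < c := by
  by_contra! h
  obtain ⟨t, ht, hct⟩ := h
  have hclosed : IsClosed (Icc a b ∩ y ⁻¹' Ici c) :=
    hy.preimage_isClosed_of_isClosed isClosed_Icc isClosed_Ici
  have hbdd : BddBelow (Icc a b ∩ y ⁻¹' Ici c) := ⟨a, fun s hs => hs.1.1⟩
  have hfirst := hclosed.csInf_mem ⟨t, ht, hct⟩ hbdd
  refine (hstep _ hfirst.1 fun s hs => ?_).not_ge hfirst.2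
  by_contra! hcs
  exact hs.2.not_ge (csInf_le hbdd ⟨⟨hs.1, hs.2.le.trans hfirst.1.2⟩, hcs⟩)

theorem integral_exp_neg_mul {l : ℝ} (hl : l ≠ 0) (t : ℝ) :
    ∫ s in (0 : ℝ)..t, exp (-l * s) = (1 - exp (-l * t)) / l := by
  rw [intervalIntegral.integral_comp_mul_left (fun x => exp x) (neg_ne_zero.mpr hl),
    integral_exp, mul_zero, exp_zero, smul_eq_mul]
  field_simp
  ring

theorem integral_exp_neg_mul_mul_le {l t M : ℝ} {f : ℝ → ℝ} (hl : 0 < l) (ht : 0 ≤ t)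
    (hM : 0 ≤ M) (hf : ∀ s ∈ Ioo 0 t, 0 ≤ f s ∧ f s ≤ M) :
    ∫ s in (0 : ℝ)..t, exp (-l * s) * f s ≤ M / l := by
  calc ∫ s in (0 : ℝ)..t, exp (-l * s) * f s ≤ ∫ s in (0 : ℝ)..t, M * exp (-l * s) := by
        simp only [intervalIntegral.integral_of_le ht, integral_Ioc_eq_integral_Ioo]
        refine integral_mono_of_nonneg ?_ ?_ ?_
        · filter_upwards [ae_restrict_mem measurableSet_Ioo] with s hs
          exact mul_nonneg (exp_pos _).le (hf s hs).1
        · exact (Continuous.integrableOn_Icc (by fun_prop)).mono_set Ioo_subset_Icc_self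
        · filter_upwards [ae_restrict_mem measurableSet_Ioo] with s hs
          rw [mul_comm M]
          exact mul_le_mul_of_nonneg_left (hf s hs).2 (exp_pos _).le
    _ = M * ((1 - exp (-l * t)) / l) := by
        rw [intervalIntegral.integral_const_mul, integral_exp_neg_mul hl.ne']
    _ ≤ M / l := by
        rw [← mul_div_assoc]
        gcongr
        exact mul_le_of_le_one_right hM (by linarith [exp_pos (-l * t)])

theorem lt_two_mul_of_le_add_mul_integral_exp_neg_mul_sq {T A B l : ℝ} (hA : 0 < A) (hB : 0 ≤ B)
    (hl : 0 < l) (hsmall : 4 * A * B < l) {y : ℝ → ℝ} (hcont : ContinuousOn y (Icc 0 T))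
    (hnn : ∀ τ ∈ Icc (0 : ℝ) T, 0 ≤ y τ)
    (hineq : ∀ τ ∈ Icc (0 : ℝ) T,
      y τ ≤ A + B * ∫ σ in (0 : ℝ)..τ, exp (-l * σ) * y σ ^ 2) :
    ∀ τ ∈ Icc (0 : ℝ) T, y τ < 2 * A := by
  refine hcont.lt_on_Icc_of_bootstrap fun t ht hlt => ?_
  have hsq : ∀ s ∈ Ioo 0 t, 0 ≤ y s ^ 2 ∧ y s ^ 2 ≤ (2 * A) ^ 2 := fun s hs =>
    ⟨sq_nonneg _, pow_le_pow_left₀ (hnn s ⟨hs.1.le, hs.2.le.trans ht.2⟩)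
      (hlt s (Ioo_subset_Ico_self hs)).le 2⟩
  have hgain : B * ((2 * A) ^ 2 / l) < A := by
    rw [← mul_div_assoc, div_lt_iff₀ hl]
    nlinarith
  calc y t ≤ A + B * ∫ σ in (0 : ℝ)..t, exp (-l * σ) * y σ ^ 2 := hineq t ht
    _ ≤ A + B * ((2 * A) ^ 2 / l) := by
        gcongr
        exact integral_exp_neg_mul_mul_le hl ht.1 (sq_nonneg _) hsq
    _ < 2 * A := by linarith

theorem stmt_12_general (T A B l : ℝ) (hA : 0 ≤ A) (hB : 0 ≤ B) (hl : 0 < l)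
    (hsmall : 4 * A * B < l)
    (y : ℝ → ℝ) (hcont : ContinuousOn y (Icc 0 T))
    (hnn : ∀ τ ∈ Icc (0:ℝ) T, 0 ≤ y τ)
    (hineq : ∀ τ ∈ Icc (0:ℝ) T,
      y τ ≤ A + B * ∫ σ in (0:ℝ)..τ, Real.exp (-l * σ) * y σ ^ 2) :
    ∀ τ ∈ Icc (0:ℝ) T, y τ ≤ 2 * A := by
  intro τ hτ
  have hsmall' : ∀ᶠ A' in 𝓝[>] A, 4 * A' * B < l :=
    eventually_nhdsWithin_of_eventually_nhds
      ((isOpen_lt (by fun_prop) continuous_const).mem_nhds hsmall)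
  have hlt : ∀ᶠ A' in 𝓝[>] A, y τ < 2 * A' := by
    filter_upwards [hsmall', self_mem_nhdsWithin] with A' hA'small hAA'
    exact lt_two_mul_of_le_add_mul_integral_exp_neg_mul_sq (hA.trans_lt hAA') hB hl hA'small
      hcont hnn (fun σ hσ => (hineq σ hσ).trans (by linarith [hAA'.out])) τ hτ
  exact ge_of_tendsto (tendsto_nhdsWithin_of_tendsto_nhds ((continuous_const.mul
    continuous_id).tendsto A)) (hlt.mono fun _ h => h.le)

/-- Nonlinear continuity/bootstrap lemma with quadratic nonlinearity. -/
theorem stmt_12 (T A B l : ℝ) (hT : 0 ≤ T) (hA : 0 ≤ A) (hB : 0 ≤ B) (hl : 0 < l)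
    (hsmall : 4 * A * B < l)
    (y : ℝ → ℝ) (hcont : ContinuousOn y (Icc 0 T))
    (hnn : ∀ τ ∈ Icc (0:ℝ) T, 0 ≤ y τ)
    (h0 : y 0 ≤ A)
    (hineq : ∀ τ ∈ Icc (0:ℝ) T,
      y τ ≤ A + B * ∫ σ in (0:ℝ)..τ, Real.exp (-l * σ) * y σ ^ 2) :
    ∀ τ ∈ Icc (0:ℝ) T, y τ ≤ 2 * A :=
  stmt_12_general T A B l hA hB hl hsmall y hcont hnn hineq
end

section
/- Relative entropy H¹ control: there exist ε₀ ∈ (0,1) and C > 0 such that for any smooth h : (0,1) → ℝ with ‖h‖_{L^∞} + ‖x h_x‖_{L^∞} < ε₀, one has ∫₀¹ (h_x² + x² h_{xx}²) dx ≤ C ∫₀¹ ( (𝔥(h))_x )² dx, where 𝔥(h) = log((1+h)²(1+h+xh_x)). -/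
open Set MeasureTheory

lemma keypt (u v s t : ℝ) (hs : |s| ≤ 1/8) (ht : |t| ≤ 1/16) :
    (1/2)*(4*u+v)^2 - (1/8)*(u^2+v^2) ≤ ((4+s+2*t)*u + (1+t)*v)^2 := by
  have ht2 : t^2 ≤ (1/16)^2 := by
    rw [← sq_abs]; exact pow_le_pow_left₀ (abs_nonneg _) ht 2
  have hst : (s+2*t)^2 ≤ (1/4)^2 := by
    have habs : |s+2*t| ≤ 1/4 := by
      calc |s+2*t| ≤ |s| + |2*t| := abs_add_le _ _
        _ ≤ 1/8 + 2*(1/16) := by rw [abs_mul, abs_two]; linarith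
        _ = 1/4 := by norm_num
    rw [← sq_abs]; exact pow_le_pow_left₀ (abs_nonneg _) habs 2
  nlinarith [sq_nonneg (4*u+v+2*((s+2*t)*u+t*v)), sq_nonneg ((s+2*t)*u - t*v),
    mul_le_mul_of_nonneg_right hst (sq_nonneg u), mul_le_mul_of_nonneg_right ht2 (sq_nonneg v),
    sq_nonneg u, sq_nonneg v]

/-- Relative entropy `H¹` control. -/
theorem stmt_15 :
    ∃ ε₀ ∈ Ioo (0:ℝ) 1, ∃ C : ℝ, 0 < C ∧
      ∀ h : ℝ → ℝ, ContDiff ℝ (⊤ : ℕ∞) h →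
        (∀ x ∈ Ioo (0:ℝ) 1, |h x| + |x * deriv h x| < ε₀) →
        ∫ x in Ioo (0:ℝ) 1, (deriv h x ^ 2 + x ^ 2 * deriv (deriv h) x ^ 2)
          ≤ C * ∫ x in Ioo (0:ℝ) 1,
              (deriv (fun y =>
                Real.log ((1 + h y) ^ 2 * (1 + h y + y * deriv h y))) x) ^ 2 := by
  refine ⟨1/32, by norm_num, 4, by norm_num, ?_⟩
  intro h hh hb
  have h0 : ContDiff ℝ (↑(⊤:ℕ∞)) h := hh.of_le (by simp)
  have h1 := contDiff_infty_iff_deriv.mp h0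
  have h2 := contDiff_infty_iff_deriv.mp h1.2
  have hdh : Differentiable ℝ h := h1.1
  have hch : Continuous h := hdh.continuous
  have hcu : Continuous (deriv h) := h1.2.continuous
  have hdu : Differentiable ℝ (deriv h) := h2.1
  have hcw : Continuous (deriv (deriv h)) := h2.2.continuous
  set u := deriv h with hu_def
  set w := deriv u with hw_def
  -- closure bound
  have hcl : ∀ x ∈ Icc (0:ℝ) 1, |h x| + |x * u x| ≤ 1/32 := by
    intro x hx
    have hsub : Icc (0:ℝ) 1 ⊆ {y | |h y| + |y * u y| ≤ 1/32} := by
      rw [← closure_Ioo (by norm_num : (0:ℝ) ≠ 1)]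
      exact closure_minimal (fun y hy => (hb y hy).le)
        (isClosed_le (by fun_prop) continuous_const)
    exact hsub hx
  have hd1 : ∀ x ∈ Icc (0:ℝ) 1, 31/32 ≤ 1 + h x ∧ 1 + h x ≤ 33/32 := by
    intro x hx
    have h3 : |h x| ≤ 1/32 :=
      le_trans (le_add_of_nonneg_right (abs_nonneg _)) (hcl x hx)
    have h4 := abs_le.mp h3
    exact ⟨by linarith [h4.1], by linarith [h4.2]⟩
  have hd2 : ∀ x ∈ Icc (0:ℝ) 1, 31/32 ≤ 1 + h x + x * u x ∧ 1 + h x + x * u x ≤ 33/32 := by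
    intro x hx
    have h3 : |h x + x * u x| ≤ 1/32 := (abs_add_le _ _).trans (hcl x hx)
    have h4 := abs_le.mp h3
    exact ⟨by linarith [h4.1], by linarith [h4.2]⟩
  set G : ℝ → ℝ := fun x => 2 * (u x / (1 + h x)) + (2 * u x + x * w x) / (1 + h x + x * u x)
    with hG_def
  -- derivative identity
  have hderiv : ∀ x ∈ Ioo (0:ℝ) 1,
      deriv (fun y => Real.log ((1 + h y) ^ 2 * (1 + h y + y * u y))) x = G x := by
    intro x hx
    have hxI : x ∈ Icc (0:ℝ) 1 := Ioo_subset_Icc_self hx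
    have hp1 : (0:ℝ) < 1 + h x := by linarith [(hd1 x hxI).1]
    have hp2 : (0:ℝ) < 1 + h x + x * u x := by linarith [(hd2 x hxI).1]
    have hev : (fun y => Real.log ((1 + h y) ^ 2 * (1 + h y + y * u y)))
        =ᶠ[nhds x] (fun y => 2 * Real.log (1 + h y) + Real.log (1 + h y + y * u y)) := by
      filter_upwards [Ioo_mem_nhds hx.1 hx.2] with y hy
      have hyI : y ∈ Icc (0:ℝ) 1 := Ioo_subset_Icc_self hy
      have hy1 : (0:ℝ) < 1 + h y := by linarith [(hd1 y hyI).1]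
      have hy2 : (0:ℝ) < 1 + h y + y * u y := by linarith [(hd2 y hyI).1]
      rw [Real.log_mul (pow_ne_zero 2 hy1.ne') hy2.ne', Real.log_pow]
      push_cast; ring
    rw [hev.deriv_eq]
    have H1 : HasDerivAt (fun y => 1 + h y) (u x) x := (hdh x).hasDerivAt.const_add 1
    have Hu : HasDerivAt u (w x) x := (hdu x).hasDerivAt
    have H2 : HasDerivAt (fun y => 1 + h y + y * u y) (u x + (1 * u x + x * w x)) x :=
      H1.add ((hasDerivAt_id x).mul Hu)
    have Hlog : HasDerivAt (fun y => 2 * Real.log (1 + h y) + Real.log (1 + h y + y * u y))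
        (2 * (u x / (1 + h x)) + (u x + (1 * u x + x * w x)) / (1 + h x + x * u x)) x :=
      ((H1.log hp1.ne').const_mul 2).add (H2.log hp2.ne')
    rw [Hlog.deriv, hG_def]
    ring
  -- pointwise inequality
  have hpt : ∀ x ∈ Ioo (0:ℝ) 1,
      (1/2)*(4*u x + x*w x)^2 - (1/8)*(u x^2 + (x*w x)^2) ≤ (G x)^2 := by
    intro x hx
    have hxI : x ∈ Icc (0:ℝ) 1 := Ioo_subset_Icc_self hx
    obtain ⟨hd1l, hd1u⟩ := hd1 x hxI
    obtain ⟨hd2l, hd2u⟩ := hd2 x hxI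
    have hp1 : (0:ℝ) < 1 + h x := by linarith
    have hp2 : (0:ℝ) < 1 + h x + x * u x := by linarith
    set s := 2/(1 + h x) - 2 with hs_def
    set t := 1/(1 + h x + x * u x) - 1 with ht_def
    have hs : |s| ≤ 1/8 := by
      rw [abs_le]
      have hA : 2/(1 + h x) ≤ 2 + 1/8 := by rw [div_le_iff₀ hp1]; nlinarith
      have hB : 2 - 1/8 ≤ 2/(1 + h x) := by rw [le_div_iff₀ hp1]; nlinarith
      constructor <;> [skip; skip] <;> simp only [hs_def] <;> linarith
    have ht : |t| ≤ 1/16 := by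
      rw [abs_le]
      have hA : 1/(1 + h x + x * u x) ≤ 1 + 1/16 := by rw [div_le_iff₀ hp2]; nlinarith
      have hB : 1 - 1/16 ≤ 1/(1 + h x + x * u x) := by rw [le_div_iff₀ hp2]; nlinarith
      constructor <;> simp only [ht_def] <;> linarith
    have hGx : G x = (4 + s + 2*t)*u x + (1+t)*(x*w x) := by
      rw [hG_def]
      simp only [hs_def, ht_def]
      field_simp
      ring
    rw [hGx]
    exact keypt (u x) (x*w x) s t hs ht
  -- continuity / integrability
  have hGcont : ContinuousOn G (Icc (0:ℝ) 1) := by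
    rw [hG_def]
    apply ContinuousOn.add
    · exact continuousOn_const.mul (hcu.continuousOn.div (by fun_prop)
        (fun x hx => by have := (hd1 x hx).1; positivity))
    · exact ContinuousOn.div (by fun_prop) (by fun_prop)
        (fun x hx => by have := (hd2 x hx).1; positivity)
  have key_int : ∀ f : ℝ → ℝ, ContinuousOn f (Icc (0:ℝ) 1) → IntegrableOn f (Ioo (0:ℝ) 1) :=
    fun f hf => hf.integrableOn_Icc.mono_set Ioo_subset_Icc_self
  have hGint : IntegrableOn (fun x => (G x)^2) (Ioo (0:ℝ) 1) := key_int _ (hGcont.pow 2)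
  have hWint : IntegrableOn
      (fun x => (1/2)*(4*u x + x*w x)^2 - (1/8)*(u x^2 + (x*w x)^2)) (Ioo (0:ℝ) 1) :=
    key_int _ (Continuous.continuousOn (by fun_prop))
  have hiS : IntegrableOn (fun x => u x^2 + (x*w x)^2) (Ioo (0:ℝ) 1) :=
    key_int _ (Continuous.continuousOn (by fun_prop))
  have hiK : IntegrableOn (fun x => u x^2 + 2*u x*(x*w x)) (Ioo (0:ℝ) 1) :=
    key_int _ (Continuous.continuousOn (by fun_prop))
  have hiU : IntegrableOn (fun x => u x^2) (Ioo (0:ℝ) 1) :=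
    key_int _ (Continuous.continuousOn (by fun_prop))
  -- integration by parts
  have hK : ∫ x in Ioo (0:ℝ) 1, (u x^2 + 2*u x*(x*w x)) = u 1 ^ 2 := by
    have hFd : ∀ y ∈ uIcc (0:ℝ) 1,
        HasDerivAt (fun z => z * u z ^ 2) (u y^2 + 2*u y*(y*w y)) y := by
      intro y _
      have h1 : HasDerivAt u (w y) y := (hdu y).hasDerivAt
      have h2 : HasDerivAt (fun z => z * u z ^ 2) (1 * u y ^ 2 + y * (((2:ℕ):ℝ) * u y ^ (2 - 1) * w y)) y :=
        (hasDerivAt_id y).mul (h1.pow 2)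
      convert h2 using 1
      push_cast; ring
    have hint : IntervalIntegrable (fun y => u y^2 + 2*u y*(y*w y)) volume 0 1 :=
      Continuous.intervalIntegrable (by fun_prop) 0 1
    have hI := intervalIntegral.integral_eq_sub_of_hasDerivAt hFd hint
    rw [intervalIntegral.integral_of_le zero_le_one, integral_Ioc_eq_integral_Ioo] at hI
    rw [hI]; ring
  -- split the integral of W
  have hWeq : ∫ x in Ioo (0:ℝ) 1, ((1/2)*(4*u x + x*w x)^2 - (1/8)*(u x^2 + (x*w x)^2))
      = (3/8) * (∫ x in Ioo (0:ℝ) 1, (u x^2 + (x*w x)^2))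
        + (2 * (∫ x in Ioo (0:ℝ) 1, (u x^2 + 2*u x*(x*w x)))
           + (11/2) * ∫ x in Ioo (0:ℝ) 1, u x^2) := by
    have e2 : IntegrableOn (fun x => 2*(u x^2 + 2*u x*(x*w x)) + (11/2)*u x^2) (Ioo (0:ℝ) 1) :=
      key_int _ (Continuous.continuousOn (by fun_prop))
    calc ∫ x in Ioo (0:ℝ) 1, ((1/2)*(4*u x + x*w x)^2 - (1/8)*(u x^2 + (x*w x)^2))
        = ∫ x in Ioo (0:ℝ) 1,
            ((3/8)*(u x^2 + (x*w x)^2) + (2*(u x^2 + 2*u x*(x*w x)) + (11/2)*u x^2)) :=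
          setIntegral_congr_fun measurableSet_Ioo (fun x _ => by ring)
      _ = (∫ x in Ioo (0:ℝ) 1, (3/8)*(u x^2 + (x*w x)^2))
            + ∫ x in Ioo (0:ℝ) 1, (2*(u x^2 + 2*u x*(x*w x)) + (11/2)*u x^2) :=
          integral_add (hiS.const_mul (3/8)) e2
      _ = (∫ x in Ioo (0:ℝ) 1, (3/8)*(u x^2 + (x*w x)^2))
            + ((∫ x in Ioo (0:ℝ) 1, 2*(u x^2 + 2*u x*(x*w x)))
               + ∫ x in Ioo (0:ℝ) 1, (11/2)*u x^2) := by
          rw [integral_add (hiK.const_mul 2) (hiU.const_mul (11/2))]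
      _ = (3/8) * (∫ x in Ioo (0:ℝ) 1, (u x^2 + (x*w x)^2))
            + (2 * (∫ x in Ioo (0:ℝ) 1, (u x^2 + 2*u x*(x*w x)))
               + (11/2) * ∫ x in Ioo (0:ℝ) 1, u x^2) := by
          rw [integral_const_mul, integral_const_mul, integral_const_mul]
  have hmono : ∫ x in Ioo (0:ℝ) 1, ((1/2)*(4*u x + x*w x)^2 - (1/8)*(u x^2 + (x*w x)^2))
      ≤ ∫ x in Ioo (0:ℝ) 1, (G x)^2 :=
    setIntegral_mono_on hWint hGint measurableSet_Ioo hpt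
  have hTnn : 0 ≤ ∫ x in Ioo (0:ℝ) 1, (G x)^2 :=
    setIntegral_nonneg measurableSet_Ioo (fun x _ => sq_nonneg _)
  have hUnn : 0 ≤ ∫ x in Ioo (0:ℝ) 1, u x^2 :=
    setIntegral_nonneg measurableSet_Ioo (fun x _ => sq_nonneg _)
  -- assemble
  have hLHS : ∫ x in Ioo (0:ℝ) 1, (u x ^ 2 + x ^ 2 * w x ^ 2)
      = ∫ x in Ioo (0:ℝ) 1, (u x^2 + (x*w x)^2) :=
    setIntegral_congr_fun measurableSet_Ioo (fun x _ => by ring)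
  have hRHS : ∫ x in Ioo (0:ℝ) 1,
      (deriv (fun y => Real.log ((1 + h y) ^ 2 * (1 + h y + y * u y))) x) ^ 2
      = ∫ x in Ioo (0:ℝ) 1, (G x)^2 :=
    setIntegral_congr_fun measurableSet_Ioo (fun x hx => by rw [hderiv x hx])
  rw [hLHS, hRHS]
  have hsq : (0:ℝ) ≤ u 1 ^ 2 := sq_nonneg _
  rw [hK] at hWeq
  linarith [hmono, hWeq]
end
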